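/- arXiv:1311.2138 — 6 statements merged into one kernel-verified Lean document; each statement's English description precedes it below -/
import Mathlib

section
/- Let q : Fin n → ℝ with 0 ≤ q i and ∑ q i ≤ 1/2. Then |∏_i (1 − q_i) − (1 − ∑_i q_i + ∑_{i<j} q_i q_j)| ≤ (∑_i q_i)³. -/
open Finset

private def e2 {n : ℕ} (q : Fin n → ℝ) (s : Finset (Fin n)) : ℝ :=
  ∑ i ∈ s, ∑ j ∈ s.filter (fun j => i < j), q i * q j

private lemma e2_insert {n : ℕ} (q : Fin n → ℝ) {a : Fin n} {s : Finset (Fin n)}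
    (ha : a ∉ s) : e2 q (insert a s) = e2 q s + q a * ∑ j ∈ s, q j := by
  unfold e2
  rw [Finset.sum_insert ha]
  have h1 : (insert a s).filter (fun j => a < j) = s.filter (fun j => a < j) := by
    rw [Finset.filter_insert]; simp [lt_irrefl]
  have h2 : ∀ i ∈ s, ∑ j ∈ (insert a s).filter (fun j => i < j), q i * q j
      = (∑ j ∈ s.filter (fun j => i < j), q i * q j) + (if i < a then q i * q a else 0) := by
    intro i hi
    rw [Finset.filter_insert]
    by_cases h : i < a
    · have hns : a ∉ s.filter (fun j => i < j) := by simp [ha]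
      rw [if_pos h, Finset.sum_insert hns, if_pos h]
      ring
    · rw [if_neg h, if_neg h, add_zero]
  rw [h1, Finset.sum_congr rfl h2, Finset.sum_add_distrib]
  have h3 : ∑ i ∈ s, (if i < a then q i * q a else 0)
      = ∑ i ∈ s.filter (fun i => i < a), q i * q a := by
    rw [Finset.sum_filter]
  have h4 : s.filter (fun i => i < a) = s.filter (fun j => ¬ a < j) := by
    apply Finset.filter_congr
    intro j hj
    have hne : j ≠ a := fun h => ha (h ▸ hj)
    constructor
    · intro h; simp; exact le_of_lt h
    · intro h; simp at h; exact lt_of_le_of_ne h hne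
  have h5 : (∑ j ∈ s.filter (fun j => a < j), q a * q j)
      + ∑ i ∈ s.filter (fun i => i < a), q i * q a = q a * ∑ j ∈ s, q j := by
    rw [h4, Finset.mul_sum]
    have := Finset.sum_filter_add_sum_filter_not s (fun j => a < j) (fun j => q a * q j)
    rw [← this]
    congr 1
    exact Finset.sum_congr rfl (fun j _ => mul_comm _ _)
  linarith [h5]

private lemma e2_nonneg {n : ℕ} (q : Fin n → ℝ) (hq0 : ∀ i, 0 ≤ q i) (s : Finset (Fin n)) :
    0 ≤ e2 q s := by
  apply Finset.sum_nonneg; intro i _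
  apply Finset.sum_nonneg; intro j _
  exact mul_nonneg (hq0 i) (hq0 j)

private lemma e2_le {n : ℕ} (q : Fin n → ℝ) (hq0 : ∀ i, 0 ≤ q i) (s : Finset (Fin n)) :
    e2 q s ≤ (∑ i ∈ s, q i) ^ 2 / 2 := by
  induction s using Finset.induction_on with
  | empty => simp [e2]
  | @insert a s ha ih =>
    rw [e2_insert q ha, Finset.sum_insert ha]
    have hS : 0 ≤ ∑ i ∈ s, q i := Finset.sum_nonneg fun i _ => hq0 i
    nlinarith [hq0 a]

private lemma key {n : ℕ} (q : Fin n → ℝ) (hq0 : ∀ i, 0 ≤ q i) (s : Finset (Fin n))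
    (hs : ∑ i ∈ s, q i ≤ 1 / 2) :
    |∏ i ∈ s, (1 - q i) - (1 - ∑ i ∈ s, q i + e2 q s)| ≤ (∑ i ∈ s, q i) ^ 3 := by
  induction s using Finset.induction_on with
  | empty => simp [e2]
  | @insert a s ha ih =>
    rw [Finset.sum_insert ha] at hs ⊢
    have hS : 0 ≤ ∑ i ∈ s, q i := Finset.sum_nonneg fun i _ => hq0 i
    have hqa : 0 ≤ q a := hq0 a
    have hs' : ∑ i ∈ s, q i ≤ 1 / 2 := by linarith
    have ih' := ih hs'
    rw [e2_insert q ha, Finset.prod_insert ha]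
    set S := ∑ i ∈ s, q i
    set P := ∏ i ∈ s, (1 - q i)
    set E := e2 q s
    have hE0 : 0 ≤ E := e2_nonneg q hq0 s
    have hE1 : E ≤ S ^ 2 / 2 := e2_le q hq0 s
    have heq : (1 - q a) * P - (1 - (q a + S) + (E + q a * S))
        = (1 - q a) * (P - (1 - S + E)) - q a * E := by ring
    rw [heq]
    have h1 : |(1 - q a) * (P - (1 - S + E)) - q a * E|
        ≤ (1 - q a) * |P - (1 - S + E)| + q a * E := by
      calc |(1 - q a) * (P - (1 - S + E)) - q a * E|
          ≤ |(1 - q a) * (P - (1 - S + E))| + |q a * E| := abs_sub _ _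
        _ = (1 - q a) * |P - (1 - S + E)| + q a * E := by
            rw [abs_mul, abs_mul, abs_of_nonneg (by linarith : (0:ℝ) ≤ 1 - q a),
              abs_of_nonneg hqa, abs_of_nonneg hE0]
    have h2 : (1 - q a) * |P - (1 - S + E)| ≤ (1 - q a) * S ^ 3 :=
      mul_le_mul_of_nonneg_left ih' (by linarith)
    have h3 : (1 - q a) * S ^ 3 + q a * E ≤ (q a + S) ^ 3 := by
      nlinarith [mul_le_mul_of_nonneg_left hE1 hqa, mul_nonneg hqa hS, mul_nonneg (mul_nonneg hqa hS) hS, mul_nonneg (mul_nonneg hqa hqa) hS, mul_nonneg (mul_nonneg hqa hqa) hqa]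
    linarith

theorem product_second_order_expansion (n : ℕ) (q : Fin n → ℝ) (hq0 : ∀ i, 0 ≤ q i)
    (hqs : ∑ i, q i ≤ 1 / 2) :
    |∏ i, (1 - q i) -
        (1 - ∑ i, q i + ∑ i, ∑ j ∈ univ.filter (fun j => i < j), q i * q j)| ≤
      (∑ i, q i) ^ 3 := by
  simpa [e2] using key q hq0 univ hqs
end

section
/- Given the maximum price tie-breaking rule, for a single unit-demand buyer with a finite product value distribution, the buyer's revenue function v ↦ R(v,p) is upper semicontinuous in p: if p_i → p, then R(v,p) ≥ limsup R(v,p_i) for every fixed valuation v. Consequently the supremum of the expected revenue over the compact box P = ∏[a_i,b_i] is attained. -/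
open Finset

/-- The maximum utility of the buyer at valuation `v` and prices `p`. -/
noncomputable def maxUtil {n : ℕ} (hn : 0 < n) (v p : Fin n → ℝ) : ℝ :=
  (univ : Finset (Fin n)).sup' ⟨⟨0, hn⟩, mem_univ _⟩ (fun i => v i - p i)

/-- The seller's revenue at valuation `v` and prices `p` under the maximum price
tie-breaking rule: if the maximum utility is nonnegative, the buyer selects an item
of maximum utility with the highest price; otherwise the revenue is 0. -/
noncomputable def Rev {n : ℕ} (hn : 0 < n) (v p : Fin n → ℝ) : ℝ :=
  if 0 ≤ maxUtil hn v p then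
    sSup {x : ℝ | ∃ i, v i - p i = maxUtil hn v p ∧ p i = x}
  else 0

/-- The expected revenue of price vector `p` for independent item values with
finite supports `supp` and probability mass functions `μ`. -/
noncomputable def ExpRev {n : ℕ} (hn : 0 < n) (supp : Fin n → Finset ℝ)
    (μ : Fin n → ℝ → ℝ) (p : Fin n → ℝ) : ℝ :=
  ∑ v ∈ Fintype.piFinset supp, (∏ i, μ i (v i)) * Rev hn v p

section aux
variable {n : ℕ} (hn : 0 < n) (v p q : Fin n → ℝ)

lemma revSet_finite : Set.Finite {x : ℝ | ∃ i, v i - p i = maxUtil hn v p ∧ p i = x} :=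
  (Set.finite_range p).subset (by rintro x ⟨i, _, rfl⟩; exact ⟨i, rfl⟩)

lemma exists_attain : ∃ i, v i - p i = maxUtil hn v p := by
  obtain ⟨i, _, h⟩ := Finset.exists_mem_eq_sup' ⟨⟨0, hn⟩, mem_univ _⟩ (fun i => v i - p i)
  exact ⟨i, h.symm⟩

lemma revSet_nonempty : {x : ℝ | ∃ i, v i - p i = maxUtil hn v p ∧ p i = x}.Nonempty := by
  obtain ⟨i, hi⟩ := exists_attain hn v p
  exact ⟨p i, i, hi, rfl⟩

lemma le_revSet_sSup {i : Fin n} (hi : v i - p i = maxUtil hn v p) :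
    p i ≤ sSup {x : ℝ | ∃ i, v i - p i = maxUtil hn v p ∧ p i = x} :=
  le_csSup (revSet_finite hn v p).bddAbove ⟨i, hi, rfl⟩

lemma revSet_sSup_mem :
    sSup {x : ℝ | ∃ i, v i - p i = maxUtil hn v p ∧ p i = x} ∈
      {x : ℝ | ∃ i, v i - p i = maxUtil hn v p ∧ p i = x} :=
  (revSet_nonempty hn v p).csSup_mem (revSet_finite hn v p)

lemma le_maxUtil (i : Fin n) : v i - p i ≤ maxUtil hn v p := by
  unfold maxUtil; exact Finset.le_sup' (fun j => v j - p j) (mem_univ i)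

lemma maxUtil_le_add_dist : maxUtil hn v q ≤ maxUtil hn v p + dist q p := by
  apply Finset.sup'_le
  intro i _
  have h1 : v i - p i ≤ maxUtil hn v p := le_maxUtil hn v p i
  have h2 : dist (q i) (p i) ≤ dist q p := dist_le_pi_dist q p i
  rw [Real.dist_eq] at h2
  have h3 : p i - q i ≤ |q i - p i| := by
    rw [abs_sub_comm]; exact le_abs_self _
  linarith

lemma rev_lower : -‖q‖ ≤ Rev hn v q := by
  unfold Rev
  split_ifs with h
  · obtain ⟨j, hj, hjq⟩ := revSet_sSup_mem hn v q
    rw [← hjq]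
    have h1 : ‖q j‖ ≤ ‖q‖ := norm_le_pi_norm q j
    rw [Real.norm_eq_abs] at h1
    have := neg_abs_le (q j)
    linarith
  · simpa using neg_nonpos.mpr (norm_nonneg q)

/-- The key ε–δ upper semicontinuity estimate. -/
lemma rev_key (hv : ∀ i, 0 ≤ v i) {ε : ℝ} (hε : 0 < ε) :
    ∃ δ > 0, ∀ q : Fin n → ℝ, dist q p < δ → Rev hn v q ≤ Rev hn v p + ε := by
  by_cases h : 0 ≤ maxUtil hn v p
  · -- positive case
    set M := maxUtil hn v p with hM
    set T : Finset (Fin n) := univ.filter (fun i => v i - p i ≠ M) with hT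
    classical
    set G : ℝ := if hTne : T.Nonempty then T.inf' hTne (fun i => M - (v i - p i)) else 1 with hG
    have hGpos : 0 < G := by
      rw [hG]
      split_ifs with hTne
      · apply Finset.lt_inf'_iff _ |>.mpr
        intro i hi
        have h1 : v i - p i ≤ M := le_maxUtil hn v p i
        have h2 : v i - p i ≠ M := (Finset.mem_filter.mp hi).2
        have := lt_of_le_of_ne h1 h2
        linarith
      · norm_num
    refine ⟨min ε (G / 3), lt_min hε (by linarith), fun q hq => ?_⟩
    have hqε : dist q p < ε := lt_of_lt_of_le hq (min_le_left _ _)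
    have hqG : dist q p < G / 3 := lt_of_lt_of_le hq (min_le_right _ _)
    have hdist : dist p q = dist q p := dist_comm p q
    have hup : maxUtil hn v q ≤ M + dist q p := maxUtil_le_add_dist hn v p q
    have hlow : M ≤ maxUtil hn v q + dist q p := by
      have := maxUtil_le_add_dist hn v q p
      rw [dist_comm p q] at this; linarith
    have hRevp : Rev hn v p = sSup {x : ℝ | ∃ i, v i - p i = M ∧ p i = x} := if_pos h
    by_cases hq0 : 0 ≤ maxUtil hn v q
    · -- revenue at q is attained at some j
      have hRevq : Rev hn v q = sSup {x : ℝ | ∃ i, v i - q i = maxUtil hn v q ∧ q i = x} :=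
        if_pos hq0
      obtain ⟨j, hj, hjq⟩ := revSet_sSup_mem hn v q
      -- v j - q j = maxUtil q
      have hcomp : dist (q j) (p j) ≤ dist q p := dist_le_pi_dist q p j
      rw [Real.dist_eq] at hcomp
      have h1 : q j ≥ p j - dist q p := by
        have : p j - q j ≤ |q j - p j| := by rw [abs_sub_comm]; exact le_abs_self _
        linarith
      have h2 : q j ≤ p j + dist q p := by
        have : q j - p j ≤ |q j - p j| := le_abs_self _
        linarith
      have h3 : v j - p j ≥ M - 2 * dist q p := by
        have : v j - q j = maxUtil hn v q := hj
        linarith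
      have h4 : v j - p j = M := by
        by_contra hne
        have hjT : j ∈ T := Finset.mem_filter.mpr ⟨mem_univ j, hne⟩
        have hTne : T.Nonempty := ⟨j, hjT⟩
        have : G ≤ M - (v j - p j) := by
          rw [hG, dif_pos hTne]; exact Finset.inf'_le _ hjT
        linarith
      have h5 : p j ≤ Rev hn v p := by
        rw [hRevp]; exact le_revSet_sSup hn v p h4
      have h6 : Rev hn v q = q j := by rw [hRevq, ← hjq]
      linarith
    · -- revenue at q is 0
      have hRevq : Rev hn v q = 0 := if_neg hq0
      push_neg at hq0
      have hMsmall : M < dist q p := by linarith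
      obtain ⟨i, hi⟩ := exists_attain hn v p
      have h5 : p i ≤ Rev hn v p := by rw [hRevp]; exact le_revSet_sSup hn v p hi
      have h6 : p i = v i - M := by linarith [hi]
      have := hv i
      -- p i = v i - M ≥ -M > -dist q p > -ε
      rw [hRevq]
      linarith
  · -- negative case
    push_neg at h
    refine ⟨-maxUtil hn v p, by linarith, fun q hq => ?_⟩
    have hup : maxUtil hn v q ≤ maxUtil hn v p + dist q p := maxUtil_le_add_dist hn v p q
    have hq0 : maxUtil hn v q < 0 := by linarith
    have h1 : Rev hn v q = 0 := if_neg (not_le.mpr hq0)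
    have h2 : Rev hn v p = 0 := if_neg (not_le.mpr h)
    rw [h1, h2]; linarith

lemma rev_usc (hv : ∀ i, 0 ≤ v i) : UpperSemicontinuous (fun p => Rev hn v p) := by
  intro p y hy
  obtain ⟨δ, hδ, hkey⟩ := rev_key hn v p hv (ε := (y - Rev hn v p) / 2) (by linarith)
  filter_upwards [Metric.ball_mem_nhds p hδ] with q hq
  have := hkey q (by rwa [Metric.mem_ball] at hq)
  linarith

end aux

/-- An upper semicontinuous real function attains its maximum on a nonempty compact set. -/
lemma usc_exists_max {X : Type*} [TopologicalSpace X] {s : Set X} (hs : IsCompact s)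
    (hne : s.Nonempty) {f : X → ℝ} (hf : UpperSemicontinuous f) :
    ∃ x ∈ s, ∀ y ∈ s, f y ≤ f x := by
  by_contra hcon
  push_neg at hcon
  classical
  choose w hw1 hw2 using hcon
  -- for each x ∈ s there is w x ∈ s with f x < f (w x)
  have hcov : ∀ (x : X) (hx : x ∈ s), {z | f z < f (w x hx)} ∈ nhds x := fun x hx =>
    hf x _ (hw2 x hx)
  obtain ⟨t, hcover⟩ := hs.elim_nhds_subcover' (fun x hx => {z | f z < f (w x hx)}) hcov
  have htne : t.Nonempty := by
    obtain ⟨x0, hx0⟩ := hne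
    have := hcover hx0
    simp only [Set.mem_iUnion] at this
    obtain ⟨i, hi, _⟩ := this
    exact ⟨i, hi⟩
  obtain ⟨j, hjt, hjmax⟩ := t.exists_max_image (fun x => f (w x.1 x.2)) htne
  have hwj : w j.1 j.2 ∈ s := hw1 j.1 j.2
  have := hcover hwj
  simp only [Set.mem_iUnion] at this
  obtain ⟨i, hit, hmem⟩ := this
  have h1 : f (w j.1 j.2) < f (w i.1 i.2) := hmem
  have h2 : f (w i.1 i.2) ≤ f (w j.1 j.2) := hjmax i hit
  linarith

lemma usc_const_mul {X : Type*} [TopologicalSpace X] {f : X → ℝ}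
    (hf : UpperSemicontinuous f) {c : ℝ} (hc : 0 ≤ c) :
    UpperSemicontinuous (fun x => c * f x) := by
  rcases hc.eq_or_lt with h | h
  · simp only [← h, zero_mul]
    exact upperSemicontinuous_const
  · intro x y hy
    have hfx : f x < y / c := (lt_div_iff₀' h).mpr hy
    filter_upwards [hf x _ hfx] with z hz
    calc c * f z < c * (y / c) := by exact mul_lt_mul_of_pos_left hz h
    _ = y := by field_simp

theorem revenue_usc_and_max_attained (n : ℕ) (hn : 0 < n)
    (supp : Fin n → Finset ℝ) (hsupp : ∀ i, (supp i).Nonempty)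
    (hpos : ∀ i, ∀ x ∈ supp i, 0 ≤ x)
    (μ : Fin n → ℝ → ℝ) (hμ0 : ∀ i x, 0 ≤ μ i x)
    (hμ1 : ∀ i, ∑ x ∈ supp i, μ i x = 1) :
    (∀ v ∈ Fintype.piFinset supp, ∀ (P : ℕ → Fin n → ℝ) (p : Fin n → ℝ),
        Filter.Tendsto P Filter.atTop (nhds p) →
        Filter.limsup (fun k => Rev hn v (P k)) Filter.atTop ≤ Rev hn v p) ∧
    (∃ pstar ∈ Set.Icc (fun i => (supp i).min' (hsupp i))
        (fun i => (supp i).max' (hsupp i)),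
      ∀ p ∈ Set.Icc (fun i => (supp i).min' (hsupp i))
          (fun i => (supp i).max' (hsupp i)),
        ExpRev hn supp μ p ≤ ExpRev hn supp μ pstar) := by
  constructor
  · intro v hv P p hP
    have hvnn : ∀ i, 0 ≤ v i := fun i => hpos i (v i) (Fintype.mem_piFinset.mp hv i)
    refine le_of_forall_pos_le_add fun ε hε => ?_
    obtain ⟨δ, hδ, hkey⟩ := rev_key hn v p hvnn hε
    have hev : ∀ᶠ k in Filter.atTop, Rev hn v (P k) ≤ Rev hn v p + ε := by
      filter_upwards [hP.eventually_mem (Metric.ball_mem_nhds p hδ)] with k hk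
      exact hkey _ (Metric.mem_ball.mp hk)
    have hlb : ∀ᶠ k in Filter.atTop, -(‖p‖ + 1) ≤ Rev hn v (P k) := by
      filter_upwards [hP.norm.eventually_le_const (lt_add_one ‖p‖)] with k hk
      have := rev_lower hn v (P k)
      linarith
    exact Filter.limsup_le_of_le (Filter.isCoboundedUnder_le_of_eventually_le _ hlb) hev
  · set lo : Fin n → ℝ := fun i => (supp i).min' (hsupp i) with hlo
    set hi : Fin n → ℝ := fun i => (supp i).max' (hsupp i) with hhi
    have hcomp : IsCompact (Set.Icc lo hi) := isCompact_Icc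
    have hlohi : lo ≤ hi := fun i => Finset.min'_le _ _ (Finset.max'_mem _ _)
    have hne : (Set.Icc lo hi).Nonempty := ⟨lo, Set.mem_Icc.mpr ⟨le_refl lo, hlohi⟩⟩
    have husc : UpperSemicontinuous (ExpRev hn supp μ) := by
      unfold ExpRev
      exact upperSemicontinuous_sum fun v hv =>
        usc_const_mul
          (rev_usc hn v fun i => hpos i (v i) (Fintype.mem_piFinset.mp hv i))
          (Finset.prod_nonneg fun i _ => hμ0 i (v i))
    obtain ⟨pstar, hps, hmax⟩ := usc_exists_max hcomp hne husc
    exact ⟨pstar, hps, hmax⟩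
end

section
/- Let G be a finite weighted directed graph with edges labeled 'weak' or 'strict'. The system of difference constraints {p_j − p_i ≤ w(i,j) for weak edges, p_j − p_i < w(i,j) for strict edges, with p_0 = 0} has a real solution if and only if G contains no cycle of negative total weight and no cycle of zero total weight containing a strict edge. -/
/-!
Give a weak edge the weight `(w, 0)` and a strict edge the weight `(w, -1)` in the
lexicographically ordered group `ℝ ×ₗ ℝ`. A real solution is the same as a lexicographic
potential `d`, i.e. `d v ≤ d u + W (u, v)` on every edge: a solution `p` gives `d = (p, 0)`,
and conversely `v ↦ x + ε y`, where `d v = (x, y)`, is a solution once `ε > 0` is small enough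
for the finitely many edges.

Over any linearly ordered group a potential exists iff no closed walk has negative weight: take
`d v` to be the least weight of a walk ending at `v`. The least weight exists because cutting a
closed subwalk out of a walk does not increase its weight, so only the finitely many walks
without repeated vertices matter. Finally, a closed walk has negative lexicographic weight
exactly when its real weight is negative, or zero with a strict edge on it.
-/

open Finset

namespace DifferenceConstraints

variable {V Γ : Type*}

def walkWeight [AddMonoid Γ] (W : V × V → Γ) : List V → Γ
  | u :: v :: l => W (u, v) + walkWeight W (v :: l)
  | _ => 0

section walkWeight

variable [AddMonoid Γ] (W : V × V → Γ)

@[simp] lemma walkWeight_nil : walkWeight W [] = 0 := rfl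

@[simp] lemma walkWeight_singleton (v : V) : walkWeight W [v] = 0 := rfl

@[simp] lemma walkWeight_cons_cons (u v : V) (l : List V) :
    walkWeight W (u :: v :: l) = W (u, v) + walkWeight W (v :: l) := rfl

lemma walkWeight_append_cons (l₁ : List V) (v : V) (l₂ : List V) :
    walkWeight W (l₁ ++ v :: l₂) = walkWeight W (l₁ ++ [v]) + walkWeight W (v :: l₂) := by
  induction l₁ with
  | nil => simp
  | cons u l₁ ih =>
    cases l₁ with
    | nil => simp
    | cons u' l₁ =>
      simp only [List.cons_append, walkWeight_cons_cons] at ih ⊢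
      rw [ih, add_assoc]

lemma walkWeight_concat_of_getLast? {l : List V} {u : V} (hl : l.getLast? = some u) (v : V) :
    walkWeight W (l ++ [v]) = walkWeight W l + W (u, v) := by
  obtain ⟨l₀, rfl⟩ := List.getLast?_eq_some_iff.mp hl
  rw [List.append_assoc, List.singleton_append, walkWeight_append_cons]
  simp

end walkWeight

lemma walkWeight_ofFn [AddCommMonoid Γ] (W : V × V → Γ) {k : ℕ} (f : Fin (k + 1) → V) :
    walkWeight W (List.ofFn f) = ∑ i : Fin k, W (f i.castSucc, f i.succ) := by
  induction k with
  | zero => simp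
  | succ k ih =>
    rw [Fin.sum_univ_succ]
    simp_rw [← Fin.succ_castSucc]
    rw [← ih (fun i => f i.succ), List.ofFn_succ, List.ofFn_succ (f := fun i => f i.succ)]
    rfl

lemma exists_eq_append_cons_append_cons_of_not_nodup {α : Type*} {l : List α} (h : ¬l.Nodup) :
    ∃ s v m t, l = s ++ v :: (m ++ v :: t) := by
  induction l with
  | nil => simp at h
  | cons a l ih =>
    rw [List.nodup_cons, not_and_or, not_not] at h
    rcases h with ha | hl
    · obtain ⟨m, t, rfl⟩ := List.append_of_mem ha
      exact ⟨[], a, m, t, rfl⟩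
    · obtain ⟨s, v, m, t, rfl⟩ := ih hl
      exact ⟨a :: s, v, m, t, rfl⟩

def IsWalk (E : Set (V × V)) (l : List V) : Prop :=
  l.IsChain fun u v => (u, v) ∈ E

lemma isWalk_ofFn_iff {E : Set (V × V)} {k : ℕ} (f : Fin (k + 1) → V) :
    IsWalk E (List.ofFn f) ↔ ∀ i : Fin k, (f i.castSucc, f i.succ) ∈ E := by
  rw [IsWalk, List.isChain_ofFn]
  exact ⟨fun h i => h i i.succ.isLt, fun h i hi => h ⟨i, by omega⟩⟩

lemma head?_ofFn_eq_getLast?_iff {k : ℕ} (f : Fin (k + 1) → V) :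
    (List.ofFn f).head? = (List.ofFn f).getLast? ↔ f 0 = f (Fin.last k) := by
  have h_head : (List.ofFn f).head? = some (f 0) := by simp
  have h_last : (List.ofFn f).getLast? = some (f (Fin.last k)) := by
    rw [List.ofFn_succ_last, List.getLast?_concat]
  rw [h_head, h_last, Option.some_inj]

lemma forall_closed_walk_nonneg_iff [AddCommMonoid Γ] [Preorder Γ] (E : Set (V × V))
    (W : V × V → Γ) :
    (∀ l, IsWalk E l → l.head? = l.getLast? → 0 ≤ walkWeight W l) ↔
      ∀ (k : ℕ) (f : Fin (k + 1) → V), f 0 = f (Fin.last k) →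
        (∀ i : Fin k, (f i.castSucc, f i.succ) ∈ E) → 0 ≤ ∑ i : Fin k, W (f i.castSucc, f i.succ) := by
  refine ⟨fun h k f hclosed hE => ?_, fun h l hl hclosed => ?_⟩
  · rw [← walkWeight_ofFn]
    exact h _ ((isWalk_ofFn_iff f).mpr hE) ((head?_ofFn_eq_getLast?_iff f).mpr hclosed)
  · cases l with
    | nil => simp
    | cons a t =>
      obtain ⟨k, f, hf⟩ : ∃ (k : ℕ) (f : Fin (k + 1) → V), List.ofFn f = a :: t :=
        ⟨t.length, fun i => (a :: t)[i], List.ofFn_getElem (xs := a :: t)⟩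
      rw [← hf, isWalk_ofFn_iff] at hl
      rw [← hf, head?_ofFn_eq_getLast?_iff] at hclosed
      rw [← hf, walkWeight_ofFn]
      exact h k f hclosed hl

section Potential

variable [AddCommMonoid Γ] [LinearOrder Γ] [IsOrderedCancelAddMonoid Γ]
  {E : Set (V × V)} {W : V × V → Γ}

lemma le_add_walkWeight {d : V → Γ} (hd : ∀ e ∈ E, d e.2 ≤ d e.1 + W e) :
    ∀ {l : List V} {a b : V}, IsWalk E l → l.head? = some a → l.getLast? = some b →
      d b ≤ d a + walkWeight W l
  | [], _, _, _, ha, _ => by simp at ha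
  | [u], a, b, _, ha, hb => by simp_all
  | u :: v :: l, a, b, hl, ha, hb => by
    obtain ⟨huv, hl⟩ := List.isChain_cons_cons.mp hl
    obtain rfl : u = a := by simpa using ha
    calc d b ≤ d v + walkWeight W (v :: l) := le_add_walkWeight hd hl rfl (by simpa using hb)
      _ ≤ d u + W (u, v) + walkWeight W (v :: l) := by gcongr; exact hd _ huv
      _ = d u + walkWeight W (u :: v :: l) := by rw [walkWeight_cons_cons, add_assoc]

lemma walkWeight_nonneg_of_potential {d : V → Γ} (hd : ∀ e ∈ E, d e.2 ≤ d e.1 + W e)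
    {l : List V} (hl : IsWalk E l) (hclosed : l.head? = l.getLast?) : 0 ≤ walkWeight W l := by
  cases l with
  | nil => simp
  | cons a t =>
    exact (le_add_iff_nonneg_right _).mp (le_add_walkWeight hd hl rfl hclosed.symm)

lemma exists_nodup_walk_le
    (hW : ∀ l, IsWalk E l → l.head? = l.getLast? → 0 ≤ walkWeight W l) (l : List V)
    (hl : IsWalk E l) :
    ∃ l', l'.Nodup ∧ IsWalk E l' ∧ l'.getLast? = l.getLast? ∧ walkWeight W l' ≤ walkWeight W l := by
  induction hlen : l.length using Nat.strong_induction_on generalizing l with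
  | _ n ih =>
  by_cases hnd : l.Nodup
  · exact ⟨l, hnd, hl, rfl, le_rfl⟩
  obtain ⟨s, v, m, t, rfl⟩ := exists_eq_append_cons_append_cons_of_not_nodup hnd
  obtain ⟨hs, hcycle_tail, hsv⟩ := List.isChain_append.mp hl
  have hcycle : IsWalk E (v :: m ++ [v]) := hcycle_tail.infix ⟨[], t, by simp⟩
  have hshort : IsWalk E (s ++ v :: t) := List.isChain_append.mpr
    ⟨hs, hcycle_tail.infix ⟨v :: m, [], by simp⟩, by simpa using hsv⟩
  obtain ⟨l', hnd', hl', hlast, hle⟩ := ih _ (by simp [← hlen]) _ hshort rfl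
  refine ⟨l', hnd', hl', by simp [hlast, List.getLast?_cons], hle.trans ?_⟩
  calc walkWeight W (s ++ v :: t) = walkWeight W (s ++ [v]) + walkWeight W (v :: t) :=
        walkWeight_append_cons W s v t
    _ ≤ walkWeight W (s ++ [v]) + (walkWeight W (v :: m ++ [v]) + walkWeight W (v :: t)) := by
        grw [← hW _ hcycle (List.getLast?_concat ..).symm, zero_add]
    _ = walkWeight W (s ++ v :: (m ++ v :: t)) := by
        rw [walkWeight_append_cons W s v (m ++ v :: t), ← List.cons_append,
          walkWeight_append_cons W (v :: m) v t]

lemma exists_walk_forall_walkWeight_le [Finite V]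
    (hW : ∀ l, IsWalk E l → l.head? = l.getLast? → 0 ≤ walkWeight W l) (v : V) :
    ∃ l, IsWalk E l ∧ l.getLast? = some v ∧
      ∀ l', IsWalk E l' → l'.getLast? = some v → walkWeight W l ≤ walkWeight W l' := by
  let S := {l : List V | l.Nodup ∧ IsWalk E l ∧ l.getLast? = some v}
  have hS : S.Finite :=
    (List.finite_length_le V (Nat.card V)).subset fun l hl => hl.1.length_le_natCard
  obtain ⟨l, ⟨-, hl, hlv⟩, hmin⟩ := S.exists_min_image (walkWeight W) hS
    ⟨[v], List.nodup_singleton v, List.isChain_singleton v, rfl⟩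
  refine ⟨l, hl, hlv, fun l' hl' hl'v => ?_⟩
  obtain ⟨l'', hnd, hl'', hlast, hle⟩ := exists_nodup_walk_le hW l' hl'
  exact (hmin l'' ⟨hnd, hl'', hlast.trans hl'v⟩).trans hle

theorem exists_potential_iff [Finite V] :
    (∃ d : V → Γ, ∀ e ∈ E, d e.2 ≤ d e.1 + W e) ↔
      ∀ l, IsWalk E l → l.head? = l.getLast? → 0 ≤ walkWeight W l := by
  refine ⟨fun ⟨d, hd⟩ l hl hclosed => walkWeight_nonneg_of_potential hd hl hclosed, fun hW => ?_⟩
  choose walk hwalk hlast hmin using exists_walk_forall_walkWeight_le hW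
  refine ⟨fun v => walkWeight W (walk v), fun ⟨u, v⟩ huv => ?_⟩
  have hext : IsWalk E (walk u ++ [v]) :=
    List.isChain_append.mpr ⟨hwalk u, List.isChain_singleton v, by simpa [hlast] using huv⟩
  calc walkWeight W (walk v) ≤ walkWeight W (walk u ++ [v]) := hmin v _ hext (by simp)
    _ = walkWeight W (walk u) + W (u, v) := walkWeight_concat_of_getLast? W (hlast u) v

end Potential

open Filter Topology in
lemma exists_pos_fst_add_mul_snd_neg (s : Finset (ℝ ×ₗ ℝ)) :
    ∃ ε > 0, ∀ z ∈ s, z < 0 → (ofLex z).1 + ε * (ofLex z).2 < 0 := by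
  have key (z : ℝ ×ₗ ℝ) (hz : z < 0) :
      ∀ᶠ ε in 𝓝[>] (0 : ℝ), (ofLex z).1 + ε * (ofLex z).2 < 0 := by
    rcases Prod.Lex.lt_iff.mp hz with h | ⟨h1, h2⟩
    · have hcont : Tendsto (fun ε : ℝ => (ofLex z).1 + ε * (ofLex z).2) (𝓝 0) (𝓝 (ofLex z).1) :=
        (by fun_prop : Continuous fun ε : ℝ => (ofLex z).1 + ε * (ofLex z).2).tendsto' 0 _
          (by simp)
      exact (hcont.eventually (gt_mem_nhds (by simpa using h))).filter_mono nhdsWithin_le_nhds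
    · filter_upwards [self_mem_nhdsWithin] with ε (hε : 0 < ε)
      simp only [ofLex_zero, Prod.fst_zero, Prod.snd_zero] at h1 h2
      rw [h1, zero_add]
      exact mul_neg_of_pos_of_neg hε h2
  have hall := (eventually_all_finset s).2 fun z _ => eventually_imp_distrib_left.2 (key z)
  obtain ⟨ε, hs, hε⟩ := (hall.and self_mem_nhdsWithin).exists
  exact ⟨ε, hε, hs⟩

theorem exists_real_solution_iff_exists_lex_potential (E : Finset (V × V)) (w : V × V → ℝ) (strict : V × V → Bool) :
    (∃ p : V → ℝ, ∀ e ∈ E, if strict e then p e.2 - p e.1 < w e else p e.2 - p e.1 ≤ w e) ↔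
      ∃ d : V → ℝ ×ₗ ℝ, ∀ e ∈ E, d e.2 ≤ d e.1 + toLex (w e, if strict e then -1 else 0) := by
  constructor
  · rintro ⟨p, hp⟩
    refine ⟨fun v => toLex (p v, 0), fun e he => ?_⟩
    have hpe := hp e he
    rw [← toLex_add, Prod.mk_add_mk, Prod.Lex.toLex_le_toLex]
    by_cases hs : strict e
    · rw [if_pos hs] at hpe ⊢
      exact .inl (by simp only; linarith)
    · rw [if_neg hs] at hpe ⊢
      rcases hpe.lt_or_eq with h | h
      · exact .inl (by simp only; linarith)
      · exact .inr ⟨by simp only; linarith, by simp⟩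
  · rintro ⟨d, hd⟩
    obtain ⟨ε, hε, hneg⟩ :=
      exists_pos_fst_add_mul_snd_neg (E.image fun e => d e.2 - d e.1 - toLex (w e, 0))
    refine ⟨fun v => (ofLex (d v)).1 + ε * (ofLex (d v)).2, fun e he => ?_⟩
    set z := d e.2 - d e.1 - toLex (w e, 0) with hz_def
    have hz : z ≤ toLex (0, if strict e then -1 else 0) := by
      rw [hz_def, sub_sub, sub_le_iff_le_add', add_assoc, ← toLex_add, Prod.mk_add_mk, add_zero,
        zero_add]
      exact hd e he
    have hφ : (ofLex z).1 + ε * (ofLex z).2 =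
        (ofLex (d e.2)).1 + ε * (ofLex (d e.2)).2 - ((ofLex (d e.1)).1 + ε * (ofLex (d e.1)).2)
          - w e := by
      simp only [hz_def, ofLex_sub, ofLex_toLex, Prod.fst_sub, Prod.snd_sub]
      ring
    have hzneg := hneg z (mem_image_of_mem _ he)
    by_cases hs : strict e
    · rw [if_pos hs] at hz ⊢
      have : z < 0 := hz.trans_lt (Prod.Lex.lt_iff.mpr (.inr ⟨by simp, by simp⟩))
      linarith [hzneg this]
    · rw [if_neg hs] at hz ⊢
      rcases hz.lt_or_eq with h | h
      · linarith [hzneg (h.trans_eq (by simp))]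
      · simp only [h, ofLex_toLex, mul_zero, add_zero] at hφ
        linarith

lemma sum_toLex_neg_iff {ι : Type*} [Fintype ι] (a : ι → ℝ) (s : ι → Bool) :
    ∑ i, toLex (a i, if s i then (-1 : ℝ) else 0) < 0 ↔
      ∑ i, a i < 0 ∨ (∑ i, a i = 0 ∧ ∃ i, s i) := by
  have hsum : ofLex (∑ i, toLex (a i, if s i then (-1 : ℝ) else 0)) =
      (∑ i, a i, ∑ i, if s i then (-1 : ℝ) else 0) := by
    rw [← coe_ofLexAddEquiv, map_sum]
    ext <;> simp [Prod.fst_sum, Prod.snd_sum]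
  have hstrict : ∑ i, (if s i then (-1 : ℝ) else 0) < 0 ↔ ∃ i, s i := by
    rw [Finset.sum_neg_iff_of_nonpos fun i _ => by split_ifs <;> norm_num]
    refine exists_congr fun i => ?_
    cases s i <;> simp
  rw [Prod.Lex.lt_iff, hsum, ← hstrict]
  rfl

end DifferenceConstraints

open DifferenceConstraints

theorem difference_constraints_feasibility (n : ℕ)
    (E : Finset (Fin (n + 1) × Fin (n + 1)))
    (w : Fin (n + 1) × Fin (n + 1) → ℝ)
    (strict : Fin (n + 1) × Fin (n + 1) → Bool) :
    (∃ p : Fin (n + 1) → ℝ, p 0 = 0 ∧ ∀ e ∈ E,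
        if strict e then p e.2 - p e.1 < w e else p e.2 - p e.1 ≤ w e) ↔
    ¬ ∃ (k : ℕ) (f : Fin (k + 1) → Fin (n + 1)), 0 < k ∧ f 0 = f (Fin.last k) ∧
        (∀ i : Fin k, (f i.castSucc, f i.succ) ∈ E) ∧
        (∑ i : Fin k, w (f i.castSucc, f i.succ) < 0 ∨
          (∑ i : Fin k, w (f i.castSucc, f i.succ) = 0 ∧
            ∃ i : Fin k, strict (f i.castSucc, f i.succ))) := by
  calc _ ↔ ∃ p : Fin (n + 1) → ℝ, ∀ e ∈ E,
          if strict e then p e.2 - p e.1 < w e else p e.2 - p e.1 ≤ w e :=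
        ⟨fun ⟨p, _, hp⟩ => ⟨p, hp⟩, fun ⟨p, hp⟩ =>
          ⟨fun v => p v - p 0, sub_self _, by simpa only [sub_sub_sub_cancel_right] using hp⟩⟩
    _ ↔ ∃ d : Fin (n + 1) → ℝ ×ₗ ℝ, ∀ e ∈ E,
          d e.2 ≤ d e.1 + toLex (w e, if strict e then -1 else 0) :=
        exists_real_solution_iff_exists_lex_potential E w strict
    _ ↔ ∀ l, IsWalk E l → l.head? = l.getLast? →
          0 ≤ walkWeight (fun e => toLex (w e, if strict e then -1 else 0)) l :=
        exists_potential_iff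
    _ ↔ _ := forall_closed_walk_nonneg_iff _ _
    _ ↔ _ := by
        simp only [← not_lt, sum_toLex_neg_iff, not_exists, not_and]
        refine forall_congr' fun k => forall_congr' fun f =>
          ⟨fun h _ => h, fun h hclosed hE hbad => h ?_ hclosed hE hbad⟩
        rcases Nat.eq_zero_or_pos k with rfl | hk
        · simp at hbad
        · exact hk
end

section
/- Maximizing a linear function with nonnegative coefficients over a set of difference constraints (a nonempty cell's closure) is achieved at the componentwise-maximal point, namely the shortest-path-distance vector from node 0. -/
open Finset

/-- ℕ-indexed walk weight set from node 0 to node j. -/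
def WSet {n : ℕ} (E : Finset (Fin (n + 1) × Fin (n + 1)))
    (w : Fin (n + 1) × Fin (n + 1) → ℝ) (j : Fin (n + 1)) : Set ℝ :=
  {c | ∃ (k : ℕ) (g : ℕ → Fin (n + 1)), g 0 = 0 ∧ g k = j ∧
    (∀ i < k, (g i, g (i + 1)) ∈ E) ∧ c = ∑ i ∈ Finset.range k, w (g i, g (i + 1))}

lemma wset_eq {n : ℕ} (E : Finset (Fin (n + 1) × Fin (n + 1)))
    (w : Fin (n + 1) × Fin (n + 1) → ℝ) (j : Fin (n + 1)) :
    {c : ℝ | ∃ (k : ℕ) (f : Fin (k + 1) → Fin (n + 1)),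
      f 0 = 0 ∧ f (Fin.last k) = j ∧
      (∀ i : Fin k, (f i.castSucc, f i.succ) ∈ E) ∧
      c = ∑ i : Fin k, w (f i.castSucc, f i.succ)} = WSet E w j := by
  ext c
  constructor
  · rintro ⟨k, f, h0, hl, he, hc⟩
    refine ⟨k, fun i => f ⟨min i k, by omega⟩, ?_, ?_, ?_, ?_⟩
    · simpa using h0
    · simpa [Fin.last] using hl
    · intro i hi
      convert he ⟨i, hi⟩ using 2
      · exact congrArg f (Fin.ext (by simp [Nat.min_eq_left hi.le]))
      · exact congrArg f (Fin.ext (by simpa [Fin.val_succ] using Nat.min_eq_left hi))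
    · rw [hc, ← Fin.sum_univ_eq_sum_range (fun i => w (f ⟨min i k, by omega⟩, f ⟨min (i+1) k, by omega⟩)) k]
      apply Finset.sum_congr rfl
      intro i _
      have hlt : (i : ℕ) < k := i.isLt
      congr 2
      · exact (congrArg f (Fin.ext (by simp [Nat.min_eq_left hlt.le]))).symm
      · exact (congrArg f (Fin.ext (by simpa [Fin.val_succ] using Nat.min_eq_left hlt))).symm
  · rintro ⟨k, g, h0, hl, he, hc⟩
    refine ⟨k, fun i => g i.val, h0, hl, ?_, ?_⟩
    · intro i; exact he i.val i.isLt
    · rw [hc, ← Fin.sum_univ_eq_sum_range (fun i => w (g i, g (i + 1))) k]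
      rfl

lemma cyc_nonneg {n : ℕ} {E : Finset (Fin (n + 1) × Fin (n + 1))}
    {w : Fin (n + 1) × Fin (n + 1) → ℝ}
    (noneg : ¬ ∃ (k : ℕ) (f : Fin (k + 1) → Fin (n + 1)), 0 < k ∧
      f 0 = f (Fin.last k) ∧ (∀ i : Fin k, (f i.castSucc, f i.succ) ∈ E) ∧
      ∑ i : Fin k, w (f i.castSucc, f i.succ) < 0)
    (g : ℕ → Fin (n + 1)) (a b : ℕ) (hab : a < b)
    (he : ∀ i, a ≤ i → i < b → (g i, g (i + 1)) ∈ E) (hgeq : g a = g b) :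
    0 ≤ ∑ i ∈ Finset.Ico a b, w (g i, g (i + 1)) := by
  by_contra h
  push_neg at h
  apply noneg
  refine ⟨b - a, fun i => g (a + i.val), by omega, ?_, ?_, ?_⟩
  · simp only [Fin.val_zero, Fin.val_last, Nat.add_zero]
    rw [Nat.add_sub_cancel' (le_of_lt hab)]
    exact hgeq
  · intro i
    have hi := i.isLt
    show (g (a + i.val), g (a + (i.val + 1))) ∈ E
    have h2 : a + (i.val + 1) = (a + i.val) + 1 := by omega
    rw [h2]
    exact he (a + i.val) (by omega) (by omega)
  · have h1 : ∑ i : Fin (b - a), w (g (a + ↑i), g (a + ↑i + 1))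
        = ∑ i ∈ Finset.range (b - a), w (g (a + i), g (a + i + 1)) :=
      Fin.sum_univ_eq_sum_range (fun i => w (g (a + i), g (a + i + 1))) (b - a)
    have h2 : ∑ i ∈ Finset.Ico a b, w (g i, g (i + 1))
        = ∑ i ∈ Finset.range (b - a), w (g (a + i), g (a + i + 1)) := by
      rw [Finset.sum_Ico_eq_sum_range]
    have h3 : ∑ i : Fin (b - a), w ((fun i : Fin (b-a+1) => g (a + i.val)) (Fin.castSucc i),
            (fun i : Fin (b-a+1) => g (a + i.val)) (Fin.succ i))
        = ∑ i : Fin (b - a), w (g (a + ↑i), g (a + ↑i + 1)) := by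
      apply Finset.sum_congr rfl; intro i _
      simp only [Fin.coe_castSucc, Fin.val_succ]
      congr 2
    calc ∑ i : Fin (b - a), w ((fun i : Fin (b-a+1) => g (a + i.val)) (Fin.castSucc i),
            (fun i : Fin (b-a+1) => g (a + i.val)) (Fin.succ i))
        = ∑ i : Fin (b - a), w (g (a + ↑i), g (a + ↑i + 1)) := h3
      _ < 0 := by rw [h1, ← h2]; exact h

lemma shorten {n : ℕ} {E : Finset (Fin (n + 1) × Fin (n + 1))}
    {w : Fin (n + 1) × Fin (n + 1) → ℝ}
    (noneg : ¬ ∃ (k : ℕ) (f : Fin (k + 1) → Fin (n + 1)), 0 < k ∧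
      f 0 = f (Fin.last k) ∧ (∀ i : Fin k, (f i.castSucc, f i.succ) ∈ E) ∧
      ∑ i : Fin k, w (f i.castSucc, f i.succ) < 0) :
    ∀ k (g : ℕ → Fin (n + 1)), (∀ i < k, (g i, g (i + 1)) ∈ E) →
    ∃ k', k' ≤ n ∧ ∃ g' : ℕ → Fin (n + 1), g' 0 = g 0 ∧ g' k' = g k ∧
      (∀ i < k', (g' i, g' (i + 1)) ∈ E) ∧
      ∑ i ∈ Finset.range k', w (g' i, g' (i + 1)) ≤ ∑ i ∈ Finset.range k, w (g i, g (i + 1)) := by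
  intro k
  induction k using Nat.strong_induction_on with
  | _ k ih =>
  intro g hg
  by_cases hk : k ≤ n
  · exact ⟨k, hk, g, rfl, rfl, hg, le_refl _⟩
  · push_neg at hk
    have hninj : ¬ Function.Injective (fun i : Fin (k + 1) => g i.val) := by
      intro hinj
      have := Fintype.card_le_of_injective _ hinj
      simp at this; omega
    obtain ⟨x, y, hxy, hne⟩ := Function.not_injective_iff.mp hninj
    obtain ⟨a, b, hab, hbk, hgab⟩ : ∃ a b : ℕ, a < b ∧ b ≤ k ∧ g a = g b := by
      rcases lt_or_gt_of_ne (fun h : x.val = y.val => hne (Fin.ext h)) with h | h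
      · exact ⟨x.val, y.val, h, by omega, hxy⟩
      · exact ⟨y.val, x.val, h, by omega, hxy.symm⟩
    set d := b - a with hd
    have hdpos : 0 < d := by omega
    have hdk : d ≤ k := by omega
    set g' : ℕ → Fin (n + 1) := fun i => if i < a then g i else g (i + d) with hg'
    have h1 : ∀ m, m ≤ a → g' m = g m := by
      intro m hm
      rcases lt_or_eq_of_le hm with h | h
      · simp [hg', h]
      · subst h
        simp only [hg', if_neg (lt_irrefl m)]
        have hb : m + d = b := by omega
        rw [hb, ← hgab]
    have h2 : ∀ m, a ≤ m → g' m = g (m + d) := by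
      intro m hm
      simp [hg', not_lt.mpr hm]
    have hak : a ≤ k - d := by omega
    have hend : g' (k - d) = g k := by
      rw [h2 _ hak]
      congr 1; omega
    have h0 : g' 0 = g 0 := h1 0 (Nat.zero_le a)
    have hedges : ∀ i < k - d, (g' i, g' (i + 1)) ∈ E := by
      intro i hi
      by_cases hia : i < a
      · rw [h1 i (le_of_lt hia), h1 (i + 1) hia]
        exact hg i (by omega)
      · push_neg at hia
        rw [h2 i hia, h2 (i + 1) (by omega)]
        have h3 : i + 1 + d = (i + d) + 1 := by omega
        rw [h3]
        exact hg (i + d) (by omega)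
    have hwt : ∑ i ∈ Finset.range (k - d), w (g' i, g' (i + 1))
        ≤ ∑ i ∈ Finset.range k, w (g i, g (i + 1)) := by
      have hsplit1 : ∑ i ∈ Finset.range (k - d), w (g' i, g' (i + 1))
          = ∑ i ∈ Finset.range a, w (g' i, g' (i + 1))
            + ∑ i ∈ Finset.Ico a (k - d), w (g' i, g' (i + 1)) := by
        rw [Finset.range_eq_Ico, ← Finset.sum_Ico_consecutive _ (Nat.zero_le a) hak,
          ← Finset.range_eq_Ico]
      have hpart1 : ∑ i ∈ Finset.range a, w (g' i, g' (i + 1))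
          = ∑ i ∈ Finset.range a, w (g i, g (i + 1)) := by
        apply Finset.sum_congr rfl
        intro i hi
        rw [Finset.mem_range] at hi
        rw [h1 i (le_of_lt hi), h1 (i + 1) hi]
      have hpart2 : ∑ i ∈ Finset.Ico a (k - d), w (g' i, g' (i + 1))
          = ∑ i ∈ Finset.Ico b k, w (g i, g (i + 1)) := by
        rw [Finset.sum_Ico_eq_sum_range, Finset.sum_Ico_eq_sum_range]
        have hlen : k - d - a = k - b := by omega
        rw [hlen]
        apply Finset.sum_congr rfl
        intro i hi
        rw [Finset.mem_range] at hi
        rw [h2 (a + i) (by omega), h2 (a + i + 1) (by omega)]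
        have e1 : a + i + d = b + i := by omega
        have e2 : a + i + 1 + d = b + i + 1 := by omega
        rw [e1, e2]
      have hsplit2 : ∑ i ∈ Finset.range k, w (g i, g (i + 1))
          = ∑ i ∈ Finset.range a, w (g i, g (i + 1))
            + ∑ i ∈ Finset.Ico a b, w (g i, g (i + 1))
            + ∑ i ∈ Finset.Ico b k, w (g i, g (i + 1)) := by
        rw [Finset.range_eq_Ico, ← Finset.sum_Ico_consecutive _ (Nat.zero_le b) hbk,
          ← Finset.sum_Ico_consecutive _ (Nat.zero_le a) (le_of_lt hab), ← Finset.range_eq_Ico]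
      have hcyc : 0 ≤ ∑ i ∈ Finset.Ico a b, w (g i, g (i + 1)) :=
        cyc_nonneg noneg g a b hab (fun i hi1 hi2 => hg i (by omega)) hgab
      rw [hsplit1, hpart1, hpart2, hsplit2]
      linarith
    obtain ⟨k', hk'n, g'', hg''0, hg''e, hg''edge, hg''wt⟩ :=
      ih (k - d) (by omega) g' hedges
    exact ⟨k', hk'n, g'', by rw [hg''0, h0], by rw [hg''e, hend], hg''edge,
      le_trans hg''wt hwt⟩

lemma telescope {n : ℕ} {E : Finset (Fin (n + 1) × Fin (n + 1))}
    {w : Fin (n + 1) × Fin (n + 1) → ℝ} (p : Fin (n + 1) → ℝ)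
    (hp : ∀ e ∈ E, p e.2 - p e.1 ≤ w e) :
    ∀ k (g : ℕ → Fin (n + 1)), (∀ i < k, (g i, g (i + 1)) ∈ E) →
      p (g k) - p (g 0) ≤ ∑ i ∈ Finset.range k, w (g i, g (i + 1)) := by
  intro k
  induction k with
  | zero => simp
  | succ k ih =>
    intro g hg
    have h1 := ih g (fun i hi => hg i (by omega))
    have h2 := hp (g k, g (k + 1)) (hg k (by omega))
    rw [Finset.sum_range_succ]
    simp only at h2
    linarith

theorem linear_max_at_shortest_distances (n : ℕ)
    (E : Finset (Fin (n + 1) × Fin (n + 1)))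
    (w : Fin (n + 1) × Fin (n + 1) → ℝ)
    (reach : ∀ j : Fin (n + 1), ∃ (k : ℕ) (f : Fin (k + 1) → Fin (n + 1)),
      f 0 = 0 ∧ f (Fin.last k) = j ∧ ∀ i : Fin k, (f i.castSucc, f i.succ) ∈ E)
    (nonegcycle : ¬ ∃ (k : ℕ) (f : Fin (k + 1) → Fin (n + 1)), 0 < k ∧
      f 0 = f (Fin.last k) ∧ (∀ i : Fin k, (f i.castSucc, f i.succ) ∈ E) ∧
      ∑ i : Fin k, w (f i.castSucc, f i.succ) < 0)
    (pstar : Fin (n + 1) → ℝ)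
    (hpstar : ∀ j : Fin (n + 1), pstar j = sInf {c : ℝ |
      ∃ (k : ℕ) (f : Fin (k + 1) → Fin (n + 1)),
        f 0 = 0 ∧ f (Fin.last k) = j ∧
        (∀ i : Fin k, (f i.castSucc, f i.succ) ∈ E) ∧
        c = ∑ i : Fin k, w (f i.castSucc, f i.succ)})
    (γ : Fin (n + 1) → ℝ) (hγ : ∀ i, 0 ≤ γ i) :
    (pstar 0 = 0 ∧ ∀ e ∈ E, pstar e.2 - pstar e.1 ≤ w e) ∧
    ∀ p : Fin (n + 1) → ℝ, p 0 = 0 → (∀ e ∈ E, p e.2 - p e.1 ≤ w e) →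
      ∑ i, γ i * p i ≤ ∑ i, γ i * pstar i := by
  have hS : ∀ j, pstar j = sInf (WSet E w j) := fun j => by rw [hpstar j, wset_eq]
  have hne : ∀ j, (WSet E w j).Nonempty := by
    intro j
    obtain ⟨k, f, h0, hl, he⟩ := reach j
    have hmem : (∑ i : Fin k, w (f i.castSucc, f i.succ)) ∈
        {c : ℝ | ∃ (k : ℕ) (f : Fin (k + 1) → Fin (n + 1)),
          f 0 = 0 ∧ f (Fin.last k) = j ∧
          (∀ i : Fin k, (f i.castSucc, f i.succ) ∈ E) ∧
          c = ∑ i : Fin k, w (f i.castSucc, f i.succ)} := ⟨k, f, h0, hl, he, rfl⟩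
    rw [wset_eq] at hmem
    exact ⟨_, hmem⟩
  set B : ℝ := ∑ e : Fin (n + 1) × Fin (n + 1), |w e| with hB
  have hBnn : 0 ≤ B := Finset.sum_nonneg fun e _ => abs_nonneg _
  have hwB : ∀ e, -B ≤ w e := by
    intro e
    have h1 : |w e| ≤ B :=
      Finset.single_le_sum (fun e _ => abs_nonneg (w e)) (Finset.mem_univ e)
    have h2 := neg_abs_le (w e)
    linarith
  have hbdd : ∀ j, BddBelow (WSet E w j) := by
    intro j
    refine ⟨-(n * B), ?_⟩
    rintro c ⟨k, g, h0, hl, he, hc⟩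
    obtain ⟨k', hk'n, g', hg'0, hg'e, hg'edge, hg'wt⟩ := shorten nonegcycle k g he
    have hlow : -(↑k' * B) ≤ ∑ i ∈ Finset.range k', w (g' i, g' (i + 1)) := by
      calc -(↑k' * B) = ∑ _i ∈ Finset.range k', (-B) := by
            rw [Finset.sum_const, Finset.card_range, nsmul_eq_mul]; ring
        _ ≤ _ := Finset.sum_le_sum fun i _ => hwB _
    have hkb : (k' : ℝ) * B ≤ n * B := by
      apply mul_le_mul_of_nonneg_right _ hBnn
      exact_mod_cast hk'n
    rw [hc]
    linarith
  have hfeas0 : pstar 0 = 0 := by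
    rw [hS 0]
    apply le_antisymm
    · apply csInf_le (hbdd 0)
      exact ⟨0, fun _ => 0, rfl, rfl, fun i hi => absurd hi (Nat.not_lt_zero i), by simp⟩
    · apply le_csInf (hne 0)
      rintro c ⟨k, g, h0, hl, he, hc⟩
      rcases Nat.eq_zero_or_pos k with h | h
      · subst h; simp at hc; simp [hc]
      · have hcyc := cyc_nonneg nonegcycle g 0 k h (fun i _ hi => he i hi) (h0.trans hl.symm)
        rw [hc, Finset.range_eq_Ico]
        exact hcyc
  have hfeasE : ∀ e ∈ E, pstar e.2 - pstar e.1 ≤ w e := by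
    intro e heE
    rw [hS e.1, hS e.2]
    have hext : ∀ c ∈ WSet E w e.1, sInf (WSet E w e.2) ≤ c + w e := by
      rintro c ⟨k, g, h0, hl, he, hc⟩
      apply csInf_le (hbdd e.2)
      refine ⟨k + 1, fun m => if m < k + 1 then g m else e.2, by simp [h0], by simp, ?_, ?_⟩
      · intro i hi
        rcases lt_or_eq_of_le (Nat.lt_succ_iff.mp hi) with h | h
        · simp only [if_pos (by omega : i < k + 1), if_pos (by omega : i + 1 < k + 1)]
          exact he i h
        · subst h
          simp only [if_pos (by omega : i < i + 1), if_neg (lt_irrefl (i + 1))]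
          rw [hl]
          simpa using heE
      · rw [Finset.sum_range_succ]
        have hterm : ∀ i ∈ Finset.range k,
            w ((if i < k + 1 then g i else e.2), (if i + 1 < k + 1 then g (i + 1) else e.2))
              = w (g i, g (i + 1)) := by
          intro i hi
          rw [Finset.mem_range] at hi
          rw [if_pos (by omega), if_pos (by omega)]
        rw [Finset.sum_congr rfl hterm, ← hc]
        simp only [if_pos (Nat.lt_succ_self k), if_neg (lt_irrefl (k + 1))]
        rw [hl]
    have hlb : ∀ c ∈ WSet E w e.1, sInf (WSet E w e.2) - w e ≤ c := by
      intro c hc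
      have := hext c hc
      linarith
    have hle : sInf (WSet E w e.2) - w e ≤ sInf (WSet E w e.1) := le_csInf (hne e.1) hlb
    linarith
  refine ⟨⟨hfeas0, hfeasE⟩, ?_⟩
  intro p hp0 hpfeas
  have hple : ∀ j, p j ≤ pstar j := by
    intro j
    rw [hS j]
    apply le_csInf (hne j)
    rintro c ⟨k, g, h0, hl, he, hc⟩
    have ht := telescope p hpfeas k g he
    rw [h0, hl, hp0, ← hc] at ht
    linarith
  apply Finset.sum_le_sum
  intro i _
  exact mul_le_mul_of_nonneg_left (hple i) (hγ i)
end

section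
/- For any price vector p ∈ ℝ≥0^n in the unit-demand item pricing problem, there exists a price vector p' with a_i ≤ p'_i ≤ b_i for every i (where a_i and b_i are the minimum and maximum support values of item i's distribution) such that R(p') ≥ R(p). -/
open Finset

open scoped Classical

noncomputable def Amax {n : ℕ} (hn : 0 < n) (v p : Fin n → ℝ) : Finset (Fin n) :=
  univ.filter (fun i => v i - p i = maxUtil hn v p)

lemma Amax_nonempty {n : ℕ} (hn : 0 < n) (v p : Fin n → ℝ) :
    (Amax hn v p).Nonempty := by
  obtain ⟨i, hi, h⟩ := Finset.exists_mem_eq_sup' (⟨⟨0, hn⟩, mem_univ _⟩ :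
    (univ : Finset (Fin n)).Nonempty) (fun i => v i - p i)
  exact ⟨i, mem_filter.mpr ⟨hi, h.symm⟩⟩

lemma rev_set_eq {n : ℕ} (hn : 0 < n) (v p : Fin n → ℝ) :
    {x : ℝ | ∃ i, v i - p i = maxUtil hn v p ∧ p i = x} = ↑((Amax hn v p).image p) := by
  ext x
  simp only [Set.mem_setOf_eq, coe_image, Set.mem_image, mem_coe, Amax, mem_filter,
    mem_univ, true_and]


lemma Rev_eq {n : ℕ} (hn : 0 < n) (v p : Fin n → ℝ) :
    Rev hn v p = if 0 ≤ maxUtil hn v p then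
      ((Amax hn v p).image p).max' ((Amax_nonempty hn v p).image p) else 0 := by
  unfold Rev
  rw [rev_set_eq]
  split_ifs with h
  · exact Finset.Nonempty.csSup_eq_max' _
  · rfl

lemma Rev_nonneg {n : ℕ} (hn : 0 < n) (v p : Fin n → ℝ) (hp : ∀ i, 0 ≤ p i) :
    0 ≤ Rev hn v p := by
  rw [Rev_eq]
  split_ifs with h
  · obtain ⟨j, hj⟩ := Amax_nonempty hn v p
    exact le_trans (hp j) (Finset.le_max' _ _ (mem_image_of_mem p hj))
  · exact le_refl 0

lemma maxUtil_add {n : ℕ} (hn : 0 < n) (v p : Fin n → ℝ) (δ : ℝ) :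
    maxUtil hn v (fun i => p i + δ) = maxUtil hn v p - δ := by
  unfold maxUtil
  apply le_antisymm
  · apply Finset.sup'_le
    intro i _
    have := Finset.le_sup' (f := fun i => v i - p i)
      (mem_univ i)
    dsimp at this ⊢
    linarith
  · rw [sub_le_iff_le_add]
    apply Finset.sup'_le
    intro i _
    have := Finset.le_sup' (f := fun i => v i - (p i + δ))
      (mem_univ i)
    dsimp at this ⊢
    linarith

lemma Amax_add {n : ℕ} (hn : 0 < n) (v p : Fin n → ℝ) (δ : ℝ) :
    Amax hn v (fun i => p i + δ) = Amax hn v p := by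
  ext i
  simp only [Amax, mem_filter, mem_univ, true_and, maxUtil_add]
  constructor <;> intro h <;> linarith

lemma Rev_add {n : ℕ} (hn : 0 < n) (v p : Fin n → ℝ) (δ : ℝ)
    (h0 : 0 ≤ δ) (hδ : δ ≤ maxUtil hn v p) :
    Rev hn v (fun i => p i + δ) = Rev hn v p + δ := by
  rw [Rev_eq, Rev_eq, maxUtil_add]
  rw [if_pos (by linarith), if_pos (by linarith)]
  have hAA := Amax_add hn v p δ
  apply le_antisymm
  · apply Finset.max'_le
    intro y hy
    obtain ⟨i, hi, rfl⟩ := mem_image.mp hy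
    rw [hAA] at hi
    have := Finset.le_max' _ (p i) (mem_image_of_mem p hi)
    linarith
  · obtain ⟨i, hi, hx⟩ := mem_image.mp (Finset.max'_mem _ ((Amax_nonempty hn v p).image p))
    rw [← hAA] at hi
    have := Finset.le_max' _ (p i + δ)
      (mem_image_of_mem (fun i => p i + δ) hi)
    linarith

lemma Rev_min {n : ℕ} (hn : 0 < n) (v q b : Fin n → ℝ)
    (hq : ∀ i, 0 ≤ q i) (hb0 : ∀ i, 0 ≤ b i) (hvb : ∀ i, v i ≤ b i) :
    Rev hn v q ≤ Rev hn v (fun i => min (q i) (b i)) := by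
  set q' : Fin n → ℝ := fun i => min (q i) (b i) with hq'
  by_cases hM : 0 ≤ maxUtil hn v q
  · -- maxUtil unchanged
    have hle : maxUtil hn v q ≤ maxUtil hn v q' := by
      apply Finset.sup'_le
      intro i _
      have h1 : v i - q i ≤ v i - q' i := by
        have := min_le_left (q i) (b i); simp only [hq']; linarith
      exact le_trans h1 (Finset.le_sup' (fun i => v i - q' i) (mem_univ i))
    have hge : maxUtil hn v q' ≤ maxUtil hn v q := by
      obtain ⟨j, _, hj⟩ := Finset.exists_mem_eq_sup' (⟨⟨0, hn⟩, mem_univ _⟩ :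
        (univ : Finset (Fin n)).Nonempty) (fun i => v i - q' i)
      have hju : maxUtil hn v q' = v j - q' j := hj
      rcases min_cases (q j) (b j) with ⟨h1, _⟩ | ⟨h1, _⟩
      · have h2 : q' j = q j := by simp only [hq']; rw [h1]
        rw [hju, h2]
        exact Finset.le_sup' (fun i => v i - q i) (mem_univ j)
      · have h2 : q' j = b j := by simp only [hq']; rw [h1]
        rw [hju, h2]
        have := hvb j
        linarith
    have hMM : maxUtil hn v q' = maxUtil hn v q := le_antisymm hge hle
    rw [Rev_eq, Rev_eq, hMM, if_pos hM, if_pos hM]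
    apply Finset.max'_subset
    intro x hx
    obtain ⟨i, hi, rfl⟩ := mem_image.mp hx
    have hiA : v i - q i = maxUtil hn v q := (mem_filter.mp hi).2
    have hqi : q i ≤ v i := by linarith
    have hmin : q' i = q i := by
      simp only [hq']; rw [min_eq_left (le_trans hqi (hvb i))]
    apply mem_image.mpr
    refine ⟨i, ?_, hmin⟩
    simp only [Amax, mem_filter, mem_univ, true_and]
    rw [hmin, hMM]
    exact hiA
  · rw [Rev_eq hn v q, if_neg hM]
    exact Rev_nonneg hn v q' (fun i => le_min (hq i) (hb0 i))

theorem prices_into_support_box (n : ℕ) (hn : 0 < n)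
    (supp : Fin n → Finset ℝ) (hsupp : ∀ i, (supp i).Nonempty)
    (hpos : ∀ i, ∀ x ∈ supp i, 0 ≤ x)
    (μ : Fin n → ℝ → ℝ) (hμ0 : ∀ i x, 0 ≤ μ i x)
    (hμ1 : ∀ i, ∑ x ∈ supp i, μ i x = 1)
    (p : Fin n → ℝ) (hp : ∀ i, 0 ≤ p i) :
    ∃ p' : Fin n → ℝ,
      (∀ i, (supp i).min' (hsupp i) ≤ p' i ∧ p' i ≤ (supp i).max' (hsupp i)) ∧
      ExpRev hn supp μ p ≤ ExpRev hn supp μ p' := by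
  set a : Fin n → ℝ := fun i => (supp i).min' (hsupp i) with ha
  set b : Fin n → ℝ := fun i => (supp i).max' (hsupp i) with hb
  have hab : ∀ i, a i ≤ b i := fun i => Finset.min'_le _ _ (Finset.max'_mem _ _)
  have hb0 : ∀ i, 0 ≤ b i := fun i => hpos i _ (Finset.max'_mem _ _)
  set δ : ℝ := max 0 ((univ : Finset (Fin n)).sup' ⟨⟨0, hn⟩, mem_univ _⟩
    (fun i => a i - p i)) with hδdef
  have hδ0 : 0 ≤ δ := le_max_left _ _
  have hδi : ∀ i, a i - p i ≤ δ := fun i =>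
    le_trans (Finset.le_sup' (fun i => a i - p i) (mem_univ i)) (le_max_right _ _)
  set p'' : Fin n → ℝ := fun i => p i + δ with hp''
  refine ⟨fun i => min (p'' i) (b i), ?_, ?_⟩
  · intro i
    constructor
    · apply le_min
      · have := hδi i; simp only [hp'']; linarith
      · exact hab i
    · exact min_le_right _ _
  · apply Finset.sum_le_sum
    intro v hv
    have hbox : ∀ i, a i ≤ v i ∧ v i ≤ b i := by
      intro i
      have hvi : v i ∈ supp i := (Fintype.mem_piFinset.mp hv) i
      exact ⟨Finset.min'_le _ _ hvi, Finset.le_max' _ _ hvi⟩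
    have step1 : Rev hn v p ≤ Rev hn v p'' := by
      rcases eq_or_lt_of_le hδ0 with h | h
      · have hpp : p'' = p := by
          funext i; simp only [hp'', ← h, add_zero]
        rw [hpp]
      · -- δ > 0, so δ equals the sup' and is attained
        obtain ⟨j, _, hj⟩ := Finset.exists_mem_eq_sup' (⟨⟨0, hn⟩, mem_univ _⟩ :
          (univ : Finset (Fin n)).Nonempty) (fun i => a i - p i)
        have hsup : δ = max 0 ((univ : Finset (Fin n)).sup' ⟨⟨0, hn⟩, mem_univ _⟩
          (fun i => a i - p i)) := hδdef
        have hδj : δ ≤ max 0 (a j - p j) := by rw [hsup, hj]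
        have hM : δ ≤ maxUtil hn v p := by
          rcases le_or_gt (a j - p j) 0 with h2 | h2
          · have : δ ≤ 0 := by
              rw [max_eq_left h2] at hδj; exact hδj
            linarith
          · have h3 : δ ≤ a j - p j := by rw [max_eq_right (le_of_lt h2)] at hδj; exact hδj
            have h4 : a j - p j ≤ v j - p j := by have := (hbox j).1; linarith
            have h5 : v j - p j ≤ maxUtil hn v p :=
              Finset.le_sup' (fun i => v i - p i) (mem_univ j)
            linarith
        rw [Rev_add hn v p δ hδ0 hM]
        linarith [Rev_nonneg hn v p hp, hδ0]
    have step2 : Rev hn v p'' ≤ Rev hn v (fun i => min (p'' i) (b i)) :=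
      Rev_min hn v p'' b (fun i => by have := hp i; simp only [hp'']; linarith)
        hb0 (fun i => (hbox i).2)
    have hprod : 0 ≤ ∏ i, μ i (v i) := Finset.prod_nonneg (fun i _ => hμ0 i _)
    exact mul_le_mul_of_nonneg_left (le_trans step1 step2) hprod
end

section
/- Let n ≥ 2, and for each pair i < j in [n] let q(i,j) ∈ [1/2 − δ, 1/2 + δ] with δ ≤ 1/(2·C(n,2)²). Then there exist probability distributions q_1,...,q_n on a finite totally ordered set such that for all i < j, if α ∼ q_i and β ∼ q_j independently, then P(α > β) = q(i,j) exactly. -/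
/-!
Let `K = C(n,2)`. Cut `[0, K(2n+4))` into `K` consecutive blocks of width `2n+4`, one for each
pair `a < b`, and let every distribution give mass `1/K` to every block, split between two atoms
placed symmetrically at offsets `r` and `2n+3-r`, where the rank `r` of `i` is `n` for `a`, `n+1`
for `b` and `i` otherwise. Comparisons across blocks are decided by the block order and contribute
`C(K,2)/K²` to every winning probability. Inside a block the atoms of the player of smaller rank
enclose those of the other, so the outcome depends only on how the enclosing player splits its
mass; with even splits each block contributes `1/(2K²)`, for a total of `1/2`. In the block of
`(a, b)` only `a` moves mass `K(q(a,b) - 1/2)` to its upper atom, and since `a` encloses only `b`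
there, this shifts exactly the probability that `a` beats `b`, by `q(a,b) - 1/2`. The bound on
`|q - 1/2|` is what keeps the weights nonnegative.
-/

open Finset

namespace PairwiseWin

section PointMasses

variable {ι κ : Type*} [Fintype ι] [Fintype κ]

def pointMasses (w : ι → ℝ) (x : ι → ℕ) (y : ℕ) : ℝ := ∑ e, if x e = y then w e else 0

lemma pointMasses_nonneg {w : ι → ℝ} (hw : ∀ e, 0 ≤ w e) (x : ι → ℕ) (y : ℕ) :
    0 ≤ pointMasses w x y :=
  sum_nonneg fun e _ => by split_ifs <;> simp [hw e]

lemma pointMasses_eq_zero (w : ι → ℝ) {x : ι → ℕ} {y : ℕ} (hy : ∀ e, x e ≠ y) :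
    pointMasses w x y = 0 :=
  sum_eq_zero fun e _ => if_neg (hy e)

lemma sum_pointMasses_mul (w : ι → ℝ) {x : ι → ℕ} {s : Finset ℕ} (hx : ∀ e, x e ∈ s)
    (h : ℕ → ℝ) :
    ∑ y ∈ s, pointMasses w x y * h y = ∑ e, w e * h (x e) := by
  simp only [pointMasses, sum_mul, ite_mul, zero_mul]
  rw [sum_comm]
  exact sum_congr rfl fun e _ => by rw [sum_ite_eq, if_pos (hx e)]

lemma sum_pointMasses (w : ι → ℝ) {x : ι → ℕ} {s : Finset ℕ} (hx : ∀ e, x e ∈ s) :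
    ∑ y ∈ s, pointMasses w x y = ∑ e, w e := by
  simpa using sum_pointMasses_mul w hx 1

def winProb (N : ℕ) (f g : ℕ → ℝ) : ℝ :=
  ∑ α ∈ range N, ∑ β ∈ range N, if β < α then f α * g β else 0

lemma winProb_eq_sum_mul (N : ℕ) (f g : ℕ → ℝ) :
    winProb N f g = ∑ α ∈ range N, f α * ∑ β ∈ range N, g β * if β < α then 1 else 0 := by
  simp only [winProb, mul_sum, mul_ite, mul_one, mul_zero]

lemma winProb_pointMasses {N : ℕ} (w : ι → ℝ) (w' : κ → ℝ) {x : ι → ℕ} {x' : κ → ℕ}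
    (hx : ∀ e, x e < N) (hx' : ∀ e, x' e < N) :
    winProb N (pointMasses w x) (pointMasses w' x') =
      ∑ e, ∑ e', if x' e' < x e then w e * w' e' else 0 := by
  rw [winProb_eq_sum_mul, sum_pointMasses_mul _ fun e => mem_range.2 (hx e)]
  refine sum_congr rfl fun e _ => ?_
  rw [sum_pointMasses_mul _ fun e => mem_range.2 (hx' e), mul_sum]
  simp only [mul_ite, mul_one, mul_zero]

end PointMasses

lemma sum_bool_ite_lt_of_encloses {x y : Bool → ℕ} (u v : Bool → ℝ)
    (h : ∀ t, x false < y t ∧ y t < x true) :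
    ∑ t, ∑ t', (if y t' < x t then u t * v t' else 0) = u true * (v true + v false) := by
  simp only [Fintype.sum_bool, h, (h true).1.not_gt, (h false).1.not_gt, if_true, if_false,
    add_zero]
  ring

lemma sum_bool_ite_lt_of_enclosed {x y : Bool → ℕ} (u v : Bool → ℝ)
    (h : ∀ t, y false < x t ∧ x t < y true) :
    ∑ t, ∑ t', (if y t' < x t then u t * v t' else 0) = (u true + u false) * v false := by
  simp only [Fintype.sum_bool, h, (h true).2.not_gt, (h false).2.not_gt, if_true, if_false,
    zero_add]
  ring

lemma mul_add_lt_mul_add_iff {W k k' o o' : ℕ} (ho : o < W) (ho' : o' < W) :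
    k' * W + o' < k * W + o ↔ k' < k ∨ k' = k ∧ o' < o := by
  rcases lt_trichotomy k' k with h | rfl | h
  · have := Nat.mul_le_mul_right W (Nat.succ_le_of_lt h)
    simp only [h, true_or, iff_true]
    rw [Nat.succ_mul] at this
    omega
  · simp
  · have := Nat.mul_le_mul_right W (Nat.succ_le_of_lt h)
    simp only [h.not_gt, h.ne', false_and, or_self, iff_false, not_lt]
    rw [Nat.succ_mul] at this
    omega

lemma choose_two_mul_le (n : ℕ) : n.choose 2 * (2 * n + 4) ≤ 2 * n ^ 3 := by
  have h : n.choose 2 * 2 = n * (n - 1) := by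
    rw [Nat.choose_two_right, Nat.div_two_mul_two_of_even (Nat.even_mul_pred_self n)]
  rcases n with _ | n
  · simp
  · calc (n + 1).choose 2 * (2 * (n + 1) + 4) = (n + 1).choose 2 * 2 * (n + 3) := by ring
      _ = (n + 1) * (n * (n + 3)) := by rw [h, Nat.add_sub_cancel, mul_assoc]
      _ ≤ (n + 1) * (2 * (n + 1) ^ 2) := Nat.mul_le_mul_left _ (by nlinarith)
      _ = 2 * (n + 1) ^ 3 := by ring

lemma sum_sum_ite_lt {α : Type*} [Fintype α] [LinearOrder α] (c : ℝ) :
    ∑ k : α, ∑ k' : α, (if k' < k then c else 0) = (Fintype.card α).choose 2 * c := by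
  rw [sum_comm, ← Fintype.sum_prod_type', ← sum_filter, sum_const,
    Fintype.card_product_filter_lt, nsmul_eq_mul]

variable (n : ℕ)

abbrev LtPair : Type := {p : Fin n × Fin n // p.1 < p.2}

lemma card_ltPair : Fintype.card (LtPair n) = n.choose 2 := by
  rw [Fintype.card_subtype, Fintype.card_product_filter_lt, Fintype.card_fin]

noncomputable def sectionIndex : LtPair n ≃ Fin (n.choose 2) :=
  Fintype.equivFinOfCardEq (card_ltPair n)

def rank (p : LtPair n) (i : Fin n) : ℕ :=
  if i = p.1.1 then n else if i = p.1.2 then n + 1 else i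

def offset (p : LtPair n) (t : Bool) (i : Fin n) : ℕ :=
  if t then 2 * n + 3 - rank n p i else rank n p i

noncomputable def position (p : LtPair n) (t : Bool) (i : Fin n) : ℕ :=
  sectionIndex n p * (2 * n + 4) + offset n p t i

variable (q : Fin n → Fin n → ℝ)

noncomputable def bias (p : LtPair n) (i : Fin n) : ℝ :=
  if i = p.1.1 then n.choose 2 * (q p.1.1 p.1.2 - 1 / 2) else 0

noncomputable def weight (p : LtPair n) : Bool → Fin n → ℝ
  | true, i => 1 / (2 * n.choose 2) + bias n q p i
  | false, i => 1 / (2 * n.choose 2) - bias n q p i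

noncomputable def distribution (i : Fin n) : ℕ → ℝ :=
  pointMasses (fun e : LtPair n × Bool => weight n q e.1 e.2 i) (fun e => position n e.1 e.2 i)

noncomputable def sectionWin (p : LtPair n) (i j : Fin n) : ℝ :=
  ∑ t, ∑ t', if offset n p t' j < offset n p t i then weight n q p t i * weight n q p t' j else 0

variable {n q}

lemma choose_two_pos (hn : 2 ≤ n) : (0 : ℝ) < n.choose 2 := Nat.cast_pos.2 (Nat.choose_pos hn)

lemma rank_le (p : LtPair n) (i : Fin n) : rank n p i ≤ n + 1 := by
  unfold rank; split_ifs <;> omega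

lemma offset_lt (p : LtPair n) (t : Bool) (i : Fin n) : offset n p t i < 2 * n + 4 := by
  have := rank_le p i
  unfold offset; split_ifs <;> omega

lemma position_lt (p : LtPair n) (t : Bool) (i : Fin n) : position n p t i < 2 * n ^ 3 + 1 := by
  calc position n p t i < (sectionIndex n p + 1) * (2 * n + 4) := by
        rw [position, add_one_mul (sectionIndex n p : ℕ)]
        exact Nat.add_lt_add_left (offset_lt p t i) _
    _ ≤ n.choose 2 * (2 * n + 4) := Nat.mul_le_mul_right _ (sectionIndex n p).isLt
    _ < 2 * n ^ 3 + 1 := Nat.lt_succ_of_le (choose_two_mul_le n)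

lemma rank_ne (p : LtPair n) {i j : Fin n} (hij : i ≠ j) : rank n p i ≠ rank n p j := by
  have := p.2
  have := i.isLt
  have := j.isLt
  unfold rank
  split_ifs <;> simp_all [Fin.ext_iff] <;> omega

lemma rank_fst (p : LtPair n) : rank n p p.1.1 = n := if_pos rfl

lemma eq_snd_of_lt_rank (p : LtPair n) {j : Fin n} (h : n < rank n p j) : j = p.1.2 := by
  have := j.isLt
  unfold rank at h
  split_ifs at h <;> first | assumption | omega

lemma offset_nested (p : LtPair n) {i j : Fin n} (h : rank n p i < rank n p j) (t : Bool) :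
    offset n p false i < offset n p t j ∧ offset n p t j < offset n p true i := by
  have := rank_le p j
  cases t <;> simp only [offset, Bool.false_eq_true, if_true, if_false] <;> omega

lemma weight_true_add_false (p : LtPair n) (i : Fin n) :
    weight n q p true i + weight n q p false i = 1 / n.choose 2 := by
  simp only [weight]; ring

lemma sectionWin_eq (hn : 2 ≤ n) {i j : Fin n} (hij : i < j) (p : LtPair n) :
    sectionWin n q p i j =
      1 / (2 * n.choose 2 ^ 2) + if p = ⟨(i, j), hij⟩ then q i j - 1 / 2 else 0 := by
  rcases Nat.lt_or_gt_of_ne (rank_ne p hij.ne) with h | h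
  · rw [sectionWin, sum_bool_ite_lt_of_encloses _ _ (offset_nested p h),
      weight_true_add_false]
    by_cases hi : i = p.1.1
    · have hj : j = p.1.2 := eq_snd_of_lt_rank p (by rwa [hi, rank_fst] at h)
      have hp : p = ⟨(i, j), hij⟩ := by ext <;> simp [hi, hj]
      have hK := (choose_two_pos hn).ne'
      subst hp
      simp only [weight, bias, if_pos]
      field_simp
    · have hp : p ≠ ⟨(i, j), hij⟩ := by rintro rfl; exact hi rfl
      simp only [weight, bias, hi, hp, if_false, add_zero]
      ring
  · rw [sectionWin, sum_bool_ite_lt_of_enclosed _ _ (offset_nested p h),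
      weight_true_add_false]
    have hj : j ≠ p.1.1 := by
      intro hj
      have hi : i = p.1.2 := eq_snd_of_lt_rank p (by rwa [hj, rank_fst] at h)
      exact lt_asymm (hi ▸ hj ▸ hij) p.2
    have hp : p ≠ ⟨(i, j), hij⟩ := by rintro rfl; simp [rank, hij.ne'] at h
    simp only [weight, bias, hj, hp, if_false, sub_zero, add_zero]
    ring

lemma sum_bool_ite_position_lt (p p' : LtPair n) (i j : Fin n) :
    ∑ t, ∑ t', (if position n p' t' j < position n p t i then
        weight n q p t i * weight n q p' t' j else 0) =
      (if sectionIndex n p' < sectionIndex n p then 1 / (n.choose 2 : ℝ) ^ 2 else 0) +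
        if p' = p then sectionWin n q p i j else 0 := by
  have hlex : ∀ t t', position n p' t' j < position n p t i ↔
      sectionIndex n p' < sectionIndex n p ∨
        sectionIndex n p' = sectionIndex n p ∧ offset n p' t' j < offset n p t i := fun t t' =>
    (mul_add_lt_mul_add_iff (offset_lt p t i) (offset_lt p' t' j)).trans
      (by rw [Fin.lt_def, Fin.ext_iff])
  rcases lt_trichotomy (sectionIndex n p') (sectionIndex n p) with h | h | h
  · have hp : p' ≠ p := fun hp => (hp ▸ h).false
    simp only [hlex, h, true_or, if_true, hp, if_false, add_zero, ← Finset.sum_mul_sum]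
    rw [Fintype.sum_bool, Fintype.sum_bool, weight_true_add_false, weight_true_add_false]
    ring
  · obtain rfl := (sectionIndex n).injective h
    simp [hlex, sectionWin]
  · simp [hlex, h.not_gt, h.ne', (sectionIndex n).injective.ne_iff.1 h.ne']

lemma weight_nonneg (hn : 2 ≤ n)
    (hq : ∀ i j : Fin n, i < j → |q i j - 1 / 2| ≤ 1 / (2 * (n.choose 2 : ℝ) ^ 2))
    (p : LtPair n) (t : Bool) (i : Fin n) : 0 ≤ weight n q p t i := by
  have hK := choose_two_pos hn
  have hbias : |bias n q p i| ≤ 1 / (2 * n.choose 2) := by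
    unfold bias
    split_ifs
    · calc |(n.choose 2 : ℝ) * (q p.1.1 p.1.2 - 1 / 2)|
          ≤ n.choose 2 * (1 / (2 * (n.choose 2 : ℝ) ^ 2)) := by
            rw [abs_mul, Nat.abs_cast]; exact mul_le_mul_of_nonneg_left (hq _ _ p.2) hK.le
        _ = 1 / (2 * n.choose 2) := by field_simp
    · simp only [abs_zero]; positivity
  cases t <;> simp only [weight] <;> linarith [abs_le.1 hbias]

lemma distribution_nonneg (hn : 2 ≤ n)
    (hq : ∀ i j : Fin n, i < j → |q i j - 1 / 2| ≤ 1 / (2 * (n.choose 2 : ℝ) ^ 2))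
    (i : Fin n) (x : ℕ) : 0 ≤ distribution n q i x :=
  pointMasses_nonneg (fun e : LtPair n × Bool => weight_nonneg hn hq e.1 e.2 i) _ x

lemma distribution_eq_zero {i : Fin n} {x : ℕ} (hx : x ∉ range (2 * n ^ 3 + 1)) :
    distribution n q i x = 0 :=
  pointMasses_eq_zero _ fun _ he => hx (he ▸ mem_range.2 (position_lt _ _ _))

lemma sum_distribution (hn : 2 ≤ n) (i : Fin n) :
    ∑ x ∈ range (2 * n ^ 3 + 1), distribution n q i x = 1 := by
  have hK := (choose_two_pos hn).ne'
  rw [distribution, sum_pointMasses _ fun e => mem_range.2 (position_lt _ _ _),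
    Fintype.sum_prod_type]
  simp only [Fintype.sum_bool, weight_true_add_false, sum_const, card_univ, card_ltPair,
    nsmul_eq_mul]
  field_simp

lemma winProb_distribution (hn : 2 ≤ n) {i j : Fin n} (hij : i < j) :
    winProb (2 * n ^ 3 + 1) (distribution n q i) (distribution n q j) = q i j := by
  have hK := (choose_two_pos hn).ne'
  have hcount : ∑ p : LtPair n, ∑ p' : LtPair n,
      (if sectionIndex n p' < sectionIndex n p then 1 / (n.choose 2 : ℝ) ^ 2 else 0) =
        (n.choose 2).choose 2 * (1 / (n.choose 2 : ℝ) ^ 2) := by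
    have hfin := sum_sum_ite_lt (α := Fin (n.choose 2)) (1 / (n.choose 2 : ℝ) ^ 2)
    rw [Fintype.card_fin] at hfin
    rw [← hfin]
    exact Fintype.sum_equiv (sectionIndex n) _ _ fun p =>
      Fintype.sum_equiv (sectionIndex n) _ _ fun p' => rfl
  rw [distribution, distribution,
    winProb_pointMasses _ _ (fun _ => position_lt _ _ _) (fun _ => position_lt _ _ _)]
  calc _ = ∑ p, ∑ p', ∑ t, ∑ t', (if position n p' t' j < position n p t i then
        weight n q p t i * weight n q p' t' j else 0) := by
        simp only [Fintype.sum_prod_type]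
        exact sum_congr rfl fun p _ => sum_comm
    _ = q i j := by
        simp only [sum_bool_ite_position_lt, sum_add_distrib, hcount, Fintype.sum_ite_eq',
          sectionWin_eq hn hij, sum_const, card_univ, card_ltPair, nsmul_eq_mul]
        rw [Nat.cast_choose_two]
        field_simp
        ring

end PairwiseWin

theorem pairwise_winning_probabilities_realizable (n : ℕ) (hn : 2 ≤ n)
    (q : Fin n → Fin n → ℝ)
    (hq : ∀ i j : Fin n, i < j →
      |q i j - 1 / 2| ≤ 1 / (2 * ((n.choose 2 : ℝ)) ^ 2)) :
    ∃ d : Fin n → ℕ → ℝ,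
      (∀ i x, 0 ≤ d i x) ∧
      (∀ i, ∀ x, x ∉ Finset.range (2 * n ^ 3 + 1) → d i x = 0) ∧
      (∀ i, ∑ x ∈ Finset.range (2 * n ^ 3 + 1), d i x = 1) ∧
      (∀ i j : Fin n, i < j →
        ∑ α ∈ Finset.range (2 * n ^ 3 + 1), ∑ β ∈ Finset.range (2 * n ^ 3 + 1),
          (if β < α then d i α * d j β else 0) = q i j) :=
  ⟨PairwiseWin.distribution n q, PairwiseWin.distribution_nonneg hn hq,
    fun _ _ => PairwiseWin.distribution_eq_zero, PairwiseWin.sum_distribution hn,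
    fun _ _ => PairwiseWin.winProb_distribution hn⟩
end
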